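/- arXiv:2110.08725 — 2 statements merged into one kernel-verified Lean document; each statement's English description precedes it below -/
import Mathlib

section
/- Let Σ be a real d×d matrix, let c : ℝ → ℝ and x : ℝ → ℝ^d be functions, and let b : ℝ → ℝ^d be differentiable with b(t)ᵀ Σ b(t) ≠ 0 for all t and derivative b'(t) = c(t) • (I − (b(t)ᵀΣb(t))⁻¹ Σ b(t) b(t)ᵀ) x(t). Then the Euclidean norm ‖b(t)‖ is constant in t: ‖b(t)‖ = ‖b(0)‖ for all t. (The norm of each neuron's weight vector does not change during gradient-flow training of the batch-normalized model.) -/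
/-! The velocity is `c • P x` with `P = 1 - (bᵀΣb)⁻¹ • Σ b bᵀ`, and
`bᵀ P = bᵀ - (bᵀΣb)⁻¹ (bᵀΣb) bᵀ = 0`. So `b` is orthogonal to its velocity and
`d/dt ‖b‖² = 2 bᵀ b' = 0`. -/

open Matrix

/-- The Euclidean norm on `Fin d → ℝ`. -/
noncomputable def euclNorm {d : ℕ} (v : Fin d → ℝ) : ℝ := Real.sqrt (∑ i, v i ^ 2)

section Projection

variable {n K : Type*} [Fintype n] [DecidableEq n] [Field K]

theorem vecMul_one_sub_inv_smul_mul_vecMulVec_self (S : Matrix n n K) (v : n → K)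
    (hv : v ⬝ᵥ S *ᵥ v ≠ 0) :
    v ᵥ* (1 - (v ⬝ᵥ S *ᵥ v)⁻¹ • (S * vecMulVec v v)) = 0 := by
  rw [vecMul_sub, vecMul_one, vecMul_smul, ← vecMul_vecMul, vecMul_vecMulVec,
    ← dotProduct_mulVec, smul_smul, inv_mul_cancel₀ hv, one_smul, sub_self]

theorem dotProduct_one_sub_inv_smul_mul_vecMulVec_self_mulVec (S : Matrix n n K) (v y : n → K)
    (hv : v ⬝ᵥ S *ᵥ v ≠ 0) :
    v ⬝ᵥ (1 - (v ⬝ᵥ S *ᵥ v)⁻¹ • (S * vecMulVec v v)) *ᵥ y = 0 := by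
  rw [dotProduct_mulVec, vecMul_one_sub_inv_smul_mul_vecMulVec_self S v hv, zero_dotProduct]

end Projection

section Flow

variable {n : Type*} [Fintype n]

theorem HasDerivAt.dotProduct_self {b : ℝ → n → ℝ} {b' : n → ℝ} {t : ℝ}
    (hb : HasDerivAt b b' t) :
    HasDerivAt (fun s ↦ b s ⬝ᵥ b s) (2 * (b t ⬝ᵥ b')) t := by
  have hcoord (i : n) : HasDerivAt (fun s ↦ b s i * b s i) (2 * (b t i * b' i)) t := by
    have hi := hasDerivAt_pi.mp hb i
    exact (hi.mul hi).congr_deriv (by ring)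
  simpa only [dotProduct, Finset.mul_sum] using HasDerivAt.fun_sum fun i _ ↦ hcoord i

theorem dotProduct_self_eq_of_hasDerivAt_of_dotProduct_eq_zero {b b' : ℝ → n → ℝ}
    (hb : ∀ t, HasDerivAt b (b' t) t) (horth : ∀ t, b t ⬝ᵥ b' t = 0) (t s : ℝ) :
    b t ⬝ᵥ b t = b s ⬝ᵥ b s := by
  have hderiv (u : ℝ) : HasDerivAt (fun s ↦ b s ⬝ᵥ b s) 0 u := by
    simpa only [horth, mul_zero] using (hb u).dotProduct_self
  exact is_const_of_deriv_eq_zero (fun u ↦ (hderiv u).differentiableAt)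
    (fun u ↦ (hderiv u).deriv) t s

end Flow

theorem euclNorm_eq_sqrt_dotProduct_self {d : ℕ} (v : Fin d → ℝ) :
    euclNorm v = Real.sqrt (v ⬝ᵥ v) := by
  simp only [euclNorm, dotProduct, sq]

/-- If `b : ℝ → ℝ^d` follows the batch-normalization gradient flow
`b'(t) = c(t) (I − (b(t)ᵀΣb(t))⁻¹ Σ b(t) b(t)ᵀ) x(t)` (with `b(t)ᵀΣb(t) ≠ 0`), then
the Euclidean norm of `b(t)` is constant in `t`. -/
theorem bn_flow_norm_constant {d : ℕ}
    (S : Matrix (Fin d) (Fin d) ℝ) (c : ℝ → ℝ) (x : ℝ → Fin d → ℝ)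
    (b : ℝ → Fin d → ℝ)
    (hne : ∀ t : ℝ, b t ⬝ᵥ (S *ᵥ b t) ≠ 0)
    (hderiv : ∀ t : ℝ, HasDerivAt b
      (c t • (((1 : Matrix (Fin d) (Fin d) ℝ)
        - (b t ⬝ᵥ (S *ᵥ b t))⁻¹ • (S * vecMulVec (b t) (b t))) *ᵥ x t)) t) :
    ∀ t : ℝ, euclNorm (b t) = euclNorm (b 0) := by
  intro t
  rw [euclNorm_eq_sqrt_dotProduct_self, euclNorm_eq_sqrt_dotProduct_self]
  refine congrArg Real.sqrt
    (dotProduct_self_eq_of_hasDerivAt_of_dotProduct_eq_zero hderiv (fun s ↦ ?_) t 0)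
  rw [dotProduct_smul, dotProduct_one_sub_inv_smul_mul_vecMulVec_self_mulVec S _ _ (hne s),
    smul_zero]
end

section
/- (Core of Proposition 1.) Let Σ be a symmetric positive definite real d×d matrix and b ∈ ℝ^d. Set M = (I − b bᵀ Σ)(I − Σ b bᵀ). Then the bilinear form (α, β) ↦ αᵀ M β is symmetric (αᵀ M β = βᵀ M α for all α, β ∈ ℝ^d) and is positive definite on the subspace T = {α ∈ ℝ^d : αᵀ Σ b = 0}: for every α ∈ T with α ≠ 0, one has αᵀ M α > 0. -/
open Matrix

lemma vecMulVec_self_transpose {d : ℕ} (b : Fin d → ℝ) :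
    (vecMulVec b b)ᵀ = vecMulVec b b := by
  ext i j
  simp [vecMulVec_apply, mul_comm]

lemma vecMulVec_self_mulVec {d : ℕ} (b α : Fin d → ℝ) :
    vecMulVec b b *ᵥ α = (b ⬝ᵥ α) • b := by
  funext i
  simp only [mulVec, dotProduct, vecMulVec_apply, Pi.smul_apply, smul_eq_mul,
    Finset.sum_mul]
  exact Finset.sum_congr rfl fun j _ => by ring

/-- **core of Proposition 1.** For `Σ` symmetric positive definite and
`M = (I − b bᵀ Σ)(I − Σ b bᵀ)`, the bilinear form `(α, β) ↦ αᵀ M β` is symmetric and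
positive definite on the tangent space `T = {α : αᵀ Σ b = 0}`. -/
theorem bilinear_form_symm_posdef_on_tangent {d : ℕ}
    (S : Matrix (Fin d) (Fin d) ℝ) (hS : S.PosDef) (b : Fin d → ℝ) :
    (∀ α β : Fin d → ℝ,
        α ⬝ᵥ ((((1 : Matrix (Fin d) (Fin d) ℝ) - vecMulVec b b * S) *
          ((1 : Matrix (Fin d) (Fin d) ℝ) - S * vecMulVec b b)) *ᵥ β)
        = β ⬝ᵥ ((((1 : Matrix (Fin d) (Fin d) ℝ) - vecMulVec b b * S) *
          ((1 : Matrix (Fin d) (Fin d) ℝ) - S * vecMulVec b b)) *ᵥ α)) ∧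
    (∀ α : Fin d → ℝ, α ⬝ᵥ (S *ᵥ b) = 0 → α ≠ 0 →
        0 < α ⬝ᵥ ((((1 : Matrix (Fin d) (Fin d) ℝ) - vecMulVec b b * S) *
          ((1 : Matrix (Fin d) (Fin d) ℝ) - S * vecMulVec b b)) *ᵥ α)) := by
  set A : Matrix (Fin d) (Fin d) ℝ := 1 - S * vecMulVec b b with hA
  have hSsymm : Sᵀ = S := hS.1.eq
  have hT : (1 : Matrix (Fin d) (Fin d) ℝ) - vecMulVec b b * S = Aᵀ := by
    rw [hA, transpose_sub, transpose_one, transpose_mul,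
      vecMulVec_self_transpose, hSsymm]
  have key : ∀ α β : Fin d → ℝ,
      α ⬝ᵥ ((Aᵀ * A) *ᵥ β) = (A *ᵥ α) ⬝ᵥ (A *ᵥ β) := by
    intro α β
    rw [← mulVec_mulVec, dotProduct_mulVec α Aᵀ, vecMul_transpose]
  have hAv : ∀ α : Fin d → ℝ, A *ᵥ α = α - (b ⬝ᵥ α) • (S *ᵥ b) := by
    intro α
    rw [hA, sub_mulVec, one_mulVec, ← mulVec_mulVec, vecMulVec_self_mulVec,
      mulVec_smul]
  constructor
  · intro α β
    rw [hT, key, key, dotProduct_comm]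
  · intro α hαT hα0
    rw [hT, key]
    have hAne : A *ᵥ α ≠ 0 := by
      intro hz
      rw [hAv] at hz
      have hαeq : α = (b ⬝ᵥ α) • (S *ᵥ b) := sub_eq_zero.mp hz
      exact hα0 (by
        have hself : α ⬝ᵥ α = 0 := by
          nth_rewrite 1 [hαeq]
          rw [smul_dotProduct, dotProduct_comm (S *ᵥ b) α, hαT, smul_zero]
        exact dotProduct_self_eq_zero.mp hself)
    have hnonneg : 0 ≤ (A *ᵥ α) ⬝ᵥ (A *ᵥ α) :=
      Finset.sum_nonneg fun i _ => mul_self_nonneg _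
    rcases hnonneg.lt_or_eq with h | h
    · exact h
    · exact absurd (dotProduct_self_eq_zero.mp h.symm) hAne
end
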